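/- Let (H,X) be a conjunctive query with ∅ ⊊ X ⊊ V(H), H connected, and x₁ ∈ X adjacent to some vertex of V(H)∖X. Let ℓ be an odd positive integer, F = F_ℓ(H,X), and c = γ ∘ π₁. Then |cpAns((H,X),(χ(F,∅),c))| > |cpAns((H,X),(χ(F,{x₁}),c))|. -/

import Mathlib

/-- The canonical map `γ` from the vertices of the `ℓ`-copy `F_ℓ(H,X)` to the
vertices of `H`: each `x ∈ X` goes to itself, and each clone `(y,i)` goes to `y`. -/
def gammaMap {V : Type*} (X : Set V) (ℓ : ℕ) :
    (↥X ⊕ (↥(Xᶜ) × Fin ℓ)) → V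
  | Sum.inl x => ↑x
  | Sum.inr (y, _) => ↑y

/-- The copy index of a vertex of `F_ℓ(H,X)` (if any). -/
def copyIdx {V : Type*} (X : Set V) (ℓ : ℕ) :
    (↥X ⊕ (↥(Xᶜ) × Fin ℓ)) → Option (Fin ℓ)
  | Sum.inl _ => none
  | Sum.inr (_, i) => some i

/-- The `ℓ`-copy `F_ℓ(H,X)`: vertex set `X ∪ ((V(H)∖X) × [ℓ])`; two vertices are
adjacent iff their `γ`-images are adjacent in `H` and, when both lie in the cloned
part, their copy indices coincide.  (Edges within `X`, edges `{u,(v,i)}` for all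
indices `i`, and edges `{(u,i),(v,i)}` within each copy.) -/
def copyGraph {V : Type*} (H : SimpleGraph V) (X : Set V) (ℓ : ℕ) :
    SimpleGraph (↥X ⊕ (↥(Xᶜ) × Fin ℓ)) where
  Adj a b := H.Adj (gammaMap X ℓ a) (gammaMap X ℓ b) ∧
    ∀ i j, copyIdx X ℓ a = some i → copyIdx X ℓ b = some j → i = j
  symm := by
    constructor
    intro a b h
    exact ⟨h.1.symm, fun i j hi hj => (h.2 j i hj hi).symm⟩
  loopless := by
    constructor
    intro a h
    exact h.1.ne rfl

/-- The vertex type of the CFI graph `χ(F,W)`: pairs `(w,S)` with `S ⊆ N_F(w)` and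
`|S| ≡ |{w} ∩ W| (mod 2)`, i.e. `|S|` is odd iff `w ∈ W`. -/
def CFIVert {V : Type*} (F : SimpleGraph V) (W : Set V) : Type _ :=
  {p : V × Set V // p.2 ⊆ F.neighborSet p.1 ∧ (p.1 ∈ W ↔ Odd p.2.ncard)}

/-- The CFI graph `χ(F,W)`: `(w,S)` and `(w',S')` are adjacent iff `{w,w'} ∈ E(F)`
and `w' ∈ S ⟺ w ∈ S'`. -/
def CFI {V : Type*} (F : SimpleGraph V) (W : Set V) : SimpleGraph (CFIVert F W) where
  Adj a b := F.Adj a.1.1 b.1.1 ∧ (b.1.1 ∈ a.1.2 ↔ a.1.1 ∈ b.1.2)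
  symm := by
    constructor
    intro a b h
    exact ⟨h.1.symm, h.2.symm⟩
  loopless := by
    constructor
    intro a h
    exact h.1.ne rfl

/-- The set of colour-prescribed answers `cpAns((H,X),(χ(F_ℓ(H,X),W), γ∘π₁))`:
maps `a : X → V(χ(F_ℓ(H,X),W))` that extend to a homomorphism `h : H → χ(F_ℓ(H,X),W)`
with `γ(π₁(h(v))) = v` for every vertex `v` of `H`. -/
def cpAnsCFI {V : Type*} (H : SimpleGraph V) (X : Set V) (ℓ : ℕ)
    (W : Set (↥X ⊕ (↥(Xᶜ) × Fin ℓ))) :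
    Set (↥X → CFIVert (copyGraph H X ℓ) W) :=
  {a | ∃ h : H →g CFI (copyGraph H X ℓ) W,
    (∀ v : V, gammaMap X ℓ (h v).1.1 = v) ∧ ∀ x : ↥X, h ↑x = a x}

/-!
An answer `x ↦ (x, S_x)` of `(H,X)` in `χ(F_ℓ(H,X),W)`, `W ⊆ X`, is encoded by a `0/1`-array: a
symmetric array on the edges of `H[X]` and, for each pair `(v, x)` with `v ∉ X`, the vector in
`(ℤ/2)^ℓ` of the copies of `v` lying in `S_x`. An array comes from an answer iff every component
`C` of `H - X` has a copy `j` into which an even number of the chosen pairs point (a handshake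
count in one direction, a `T`-join in `H - X` in the other), and `W` prescribes the parities
`|S_x|`. So the two answer sets are the fibres over `0` and over `e_{x₁}` of the parity map on one
set `A` of arrays, and by Fourier inversion on `(ℤ/2)^X` the difference of their sizes is a
positive multiple of `∑_{ε ∋ x₁} Â(ε)`, where `Â(ε) = ∑_{a ∈ A} (-1)^{∑_{x ∈ ε} |S_x|}`.
Now `Â(ε)` is a character sum over a subgroup (the `H[X]` part) times one factor per component
`C`. That factor vanishes if `ε` separates two pairs into `C` (adding both in one copy flips the
sign), counts arrays if no pair into `C` meets `ε`, and otherwise is a character sum plus the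
number of arrays without an even copy, which have odd total because `ℓ` is odd. Hence `Â ≥ 0`
and `Â(X) > 0`.
-/

open Finset

noncomputable section

open scoped Classical

namespace SimpleGraph

variable {V : Type*} {G : SimpleGraph V}

lemma Reachable.eq_of_forall_adj {β : Type*} {f : V → β} (hf : ∀ u w, G.Adj u w → f u = f w)
    {u w : V} (h : G.Reachable u w) : f u = f w := by
  obtain ⟨p⟩ := h
  induction p with
  | nil => rfl
  | cons ha _ ih => exact (hf _ _ ha).trans ih

variable [Fintype V]

lemma Walk.sum_count_edges {u v : V} (p : G.Walk u v) (a : V) :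
    ∑ b, (p.edges.count s(a, b) : ZMod 2) = (if a = u then 1 else 0) + if a = v then 1 else 0 := by
  induction p with
  | nil => simp [CharTwo.add_self_eq_zero]
  | @cons u w v h p ih =>
    have hstep : ∑ b, (if s(u, w) = s(a, b) then 1 else 0 : ZMod 2) =
        (if a = u then 1 else 0) + if a = w then 1 else 0 := by
      by_cases hau : a = u
      · subst hau; simp [h.ne, eq_comm]
      · by_cases haw : a = w
        · subst haw; simp [hau, eq_comm]
        · simp [hau, haw, Ne.symm hau, Ne.symm haw]
    simp only [Walk.edges_cons, List.count_cons, beq_iff_eq, Nat.cast_add, Nat.cast_ite,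
      Nat.cast_one, Nat.cast_zero, sum_add_distrib, ih, hstep]
    exact (by decide : ∀ x y z : ZMod 2, y + z + (x + y) = x + z) _ _ _

theorem exists_symm_adj_sum_eq (r : V → ZMod 2)
    (hr : ∀ C : G.ConnectedComponent, ∑ v with G.connectedComponentMk v = C, r v = 0) :
    ∃ ε : V → V → ZMod 2, (∀ a b, ε a b = ε b a) ∧ (∀ a b, ε a b ≠ 0 → G.Adj a b) ∧
      ∀ a, ∑ b, ε a b = r a := by
  -- A `T`-join: add up, over all `v` with `r v = 1`, the edges of a walk from `v` to the
  -- representative of its component; the contributions at the representatives cancel by `hr`.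
  let root (v : V) : V := (G.connectedComponentMk v).out
  have hroot (v : V) : G.connectedComponentMk (root v) = G.connectedComponentMk v :=
    (G.connectedComponentMk v).out_eq
  let walk (v : V) : G.Walk v (root v) := (ConnectedComponent.exact (hroot v).symm).some
  refine ⟨fun a b => ∑ v, r v * (walk v).edges.count s(a, b),
    fun a b => by dsimp only; rw [Sym2.eq_swap], fun a b h => ?_, fun a => ?_⟩
  · obtain ⟨v, -, hv⟩ := exists_ne_zero_of_sum_ne_zero h
    have : s(a, b) ∈ (walk v).edges :=
      List.count_pos_iff.mp (Nat.pos_of_ne_zero fun h0 => by simp [h0] at hv)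
    exact (walk v).adj_of_mem_edges this
  · rw [sum_comm]
    simp_rw [← mul_sum, Walk.sum_count_edges, mul_add, sum_add_distrib, mul_ite, mul_one,
      mul_zero, sum_ite_eq, if_pos (mem_univ a), ← sum_filter, add_eq_left]
    by_cases ha : ∃ v, root v = a
    · obtain ⟨v₀, rfl⟩ := ha
      rw [filter_congr fun v _ => show root v₀ = root v ↔
          G.connectedComponentMk v = G.connectedComponentMk v₀ from
        ⟨fun h => by rw [← hroot v, ← h, hroot], fun h => by simp only [root, h]⟩, hr]
    · push Not at ha
      exact sum_eq_zero fun v hv => absurd (mem_filter.mp hv).2.symm (ha v)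

end SimpleGraph

namespace CopyCFI

def sgn (a : ZMod 2) : ℤ := if a = 0 then 1 else -1

@[simp] lemma sgn_zero : sgn 0 = 1 := rfl

@[simp] lemma sgn_one : sgn 1 = -1 := rfl

lemma sgn_add (a b : ZMod 2) : sgn (a + b) = sgn a * sgn b := by decide +revert

lemma sgn_sum {ι : Type*} (s : Finset ι) (f : ι → ZMod 2) :
    sgn (∑ i ∈ s, f i) = ∏ i ∈ s, sgn (f i) := by
  induction s using Finset.induction_on with
  | empty => rfl
  | insert i s hi ih => rw [sum_insert hi, prod_insert hi, sgn_add, ih]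

lemma eq_zero_or_one (a : ZMod 2) : a = 0 ∨ a = 1 := by decide +revert

lemma ne_one_iff_eq_zero (a : ZMod 2) : a ≠ 1 ↔ a = 0 := by decide +revert

lemma natCast_ncard_eq_sum {α : Type*} [Fintype α] (S : Set α) :
    (S.ncard : ZMod 2) = ∑ a, if a ∈ S then 1 else 0 := by
  rw [Set.ncard_eq_toFinset_card', sum_boole]
  congr 2
  ext
  simp

lemma natCast_eq_ite_iff {P : Prop} {n : ℕ} :
    (n : ZMod 2) = (if P then 1 else 0) ↔ (P ↔ Odd n) := by
  rw [← ZMod.natCast_eq_one_iff_odd]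
  rcases eq_zero_or_one (n : ZMod 2) with h | h <;> by_cases hP : P <;> simp [h, hP]

lemma sum_sum_eq_zero_of_symm {α : Type*} (s : Finset α) (f : α → α → ZMod 2)
    (hsymm : ∀ a ∈ s, ∀ b ∈ s, f a b = f b a) (hdiag : ∀ a ∈ s, f a a = 0) :
    ∑ a ∈ s, ∑ b ∈ s, f a b = 0 := by
  rw [← sum_product']
  refine sum_involution (fun p _ => p.swap) (fun p hp => ?_) (fun p hp hne h => ?_)
    (fun p hp => mem_product.mpr (mem_product.mp hp).symm) (fun p _ => rfl)
  · obtain ⟨ha, hb⟩ := mem_product.mp hp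
    rw [Prod.fst_swap, Prod.snd_swap, hsymm _ hb _ ha, CharTwo.add_self_eq_zero]
  · obtain ⟨ha, -⟩ := mem_product.mp hp
    have : p.1 = p.2 := (congrArg Prod.fst h).symm
    exact hne (this ▸ hdiag _ ha)

lemma sum_filter_fst {α β M : Type*} [Fintype α] [Fintype β] [AddCommMonoid M] (P : α → Prop)
    (f : α × β → M) : ∑ p with P p.1, f p = ∑ a with P a, ∑ b, f (a, b) := by
  simp only [sum_filter, Fintype.sum_prod_type]
  exact sum_congr rfl fun a _ => by split_ifs <;> simp

theorem sum_prod_fiber {ι κ M R : Type*} [Fintype κ] [CommSemiring R] [Fintype (ι → M)]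
    (p : ι → κ) [∀ k, Fintype ({i // p i = k} → M)] (f : ∀ k, ({i // p i = k} → M) → R) :
    ∑ t : ι → M, ∏ k, f k (fun i => t i) = ∏ k, ∑ u : {i // p i = k} → M, f k u := by
  rw [Fintype.prod_sum]
  exact Fintype.sum_equiv (((Equiv.sigmaFiberEquiv p).symm.arrowCongr (Equiv.refl M)).trans
    (Equiv.piCurry fun _ _ => M)) _ _ fun t => rfl

section CharacterSums

variable {G : Type*} [AddCommGroup G] [Module (ZMod 2) G] {S : Finset G} {φ : G → ZMod 2}

lemma sum_sgn_eq_zero_of_add_mem (hφ : ∀ a b, φ (a + b) = φ a + φ b) {τ : G}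
    (hτS : ∀ a ∈ S, a + τ ∈ S) (hτ : φ τ = 1) : ∑ a ∈ S, sgn (φ a) = 0 := by
  have hφ0 : φ 0 = 0 := by simpa using hφ 0 0
  refine sum_involution (fun a _ => a + τ) (fun a _ => ?_) (fun a _ _ h => ?_) hτS
    (fun a _ => by rw [add_assoc, ZModModule.add_self, add_zero])
  · rw [hφ, hτ, sgn_add, sgn_one]; ring
  · rw [add_eq_left] at h
    rw [h, hφ0] at hτ
    exact zero_ne_one hτ

lemma sum_sgn_nonneg_of_add_mem (hS : ∀ a ∈ S, ∀ b ∈ S, a + b ∈ S)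
    (hφ : ∀ a b, φ (a + b) = φ a + φ b) : 0 ≤ ∑ a ∈ S, sgn (φ a) := by
  by_cases h : ∃ τ ∈ S, φ τ = 1
  · obtain ⟨τ, hτS, hτ⟩ := h
    exact (sum_sgn_eq_zero_of_add_mem hφ (fun a ha => hS a ha τ hτS) hτ).ge
  · push Not at h
    rw [sum_congr rfl fun a ha => by rw [(ne_one_iff_eq_zero _).mp (h a ha), sgn_zero]]
    simp

lemma sgn_mul_prod_one_add_sgn {ι : Type*} [Fintype ι] (v : ι → ZMod 2) (i : ι) :
    sgn (v i) * ∏ x ∈ univ.erase i, (1 + sgn (v x)) =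
      2 ^ #(univ.erase i) * ((if v = 0 then 1 else 0) - if v = Pi.single i 1 then 1 else 0) := by
  have h1 (b : ZMod 2) : 1 + sgn b = if b = 0 then 2 else 0 := by decide +revert
  simp_rw [h1, prod_ite_zero, prod_const]
  by_cases h : ∀ x ∈ univ.erase i, v x = 0
  · have hv : v = Pi.single i (v i) := by
      funext x
      by_cases hx : x = i
      · subst hx; simp
      · simp [hx, h x (mem_erase.mpr ⟨hx, mem_univ x⟩)]
    rw [if_pos h, hv]
    rcases eq_zero_or_one (v i) with h0 | h0 <;> simp [h0, eq_comm (a := (0 : ι → ZMod 2))]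
  · have h0 : v ≠ 0 := fun h0 => h fun x _ => by simp [h0]
    have h1 : v ≠ Pi.single i 1 := fun h1 => h fun x hx => by simp [h1, (mem_erase.mp hx).1]
    rw [if_neg h]
    simp [h0, h1]

theorem card_filter_eq_single_lt_card_filter_eq_zero {α ι : Type*} [Fintype ι] (S : Finset α)
    (f : α → ι → ZMod 2) (i : ι)
    (hnonneg : ∀ ε : Finset ι, 0 ≤ ∑ a ∈ S, sgn (∑ x ∈ ε, f a x))
    (hpos : 0 < ∑ a ∈ S, sgn (∑ x, f a x)) :
    #{a ∈ S | f a = Pi.single i 1} < #{a ∈ S | f a = 0} := by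
  -- Both sides of `key` are `∑_{a ∈ S} sgn (f a i) * ∏_{x ≠ i} (1 + sgn (f a x))`, expanded in two
  -- ways.
  set E := univ.erase i
  have expand (a : α) : sgn (f a i) * ∏ x ∈ E, (1 + sgn (f a x)) =
      ∑ T ∈ E.powerset, sgn (∑ x ∈ insert i T, f a x) := by
    rw [prod_one_add, mul_sum]
    refine sum_congr rfl fun T hT => ?_
    have hi : i ∉ T := fun h => notMem_erase i univ (mem_powerset.mp hT h)
    rw [sum_insert hi, sgn_add, sgn_sum]
  have key : (2 : ℤ) ^ #E * (#{a ∈ S | f a = 0} - #{a ∈ S | f a = Pi.single i 1}) =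
      ∑ T ∈ E.powerset, ∑ a ∈ S, sgn (∑ x ∈ insert i T, f a x) := by
    rw [sum_comm, ← sum_congr rfl fun a _ => expand a,
      sum_congr rfl fun a _ => sgn_mul_prod_one_add_sgn (f a) i, ← mul_sum, sum_sub_distrib,
      sum_boole, sum_boole]
  have huniv : insert i E = univ := insert_erase (mem_univ i)
  have : 0 < ∑ T ∈ E.powerset, ∑ a ∈ S, sgn (∑ x ∈ insert i T, f a x) :=
    lt_of_lt_of_le (by rwa [huniv]) (single_le_sum (fun T _ => hnonneg _) (mem_powerset_self E))
  rw [← key] at this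
  have := pos_of_mul_pos_right this (by positivity)
  omega

end CharacterSums

section Layers

variable {E : Type*} [Fintype E] {ℓ : ℕ}

def IsEvenLayerArray (R : E → Prop) (u : E → Fin ℓ → ZMod 2) : Prop :=
  (∀ e, ¬ R e → u e = 0) ∧ ∃ j, ∑ e, u e j = 0

variable [DecidableEq E]

theorem sum_sgn_isEvenLayerArray_pos (hℓ : Odd ℓ) (R : E → Prop) :
    0 < ∑ u with IsEvenLayerArray R u, sgn (∑ e, ∑ j : Fin ℓ, u e j) := by
  set full : Finset (E → Fin ℓ → ZMod 2) := {u | ∀ e, ¬ R e → u e = 0}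
  -- each of these has total `ℓ`, which is odd
  set bad := {u ∈ full | ∀ j, ∑ e, u e j = 1}
  have hsplit : ({u | IsEvenLayerArray R u} : Finset (E → Fin ℓ → ZMod 2)) =
      {u ∈ full | ¬ ∀ j, ∑ e, u e j = 1} := by
    ext u
    rw [mem_filter, mem_filter]
    simp only [IsEvenLayerArray, full, mem_filter, mem_univ, true_and, not_forall, ← ne_eq,
      ne_one_iff_eq_zero]
  have hbad : ∑ u ∈ bad, sgn (∑ e, ∑ j, u e j) = - #bad := by
    rw [sum_congr rfl fun u hu => ?_, sum_const, nsmul_eq_mul, mul_neg_one]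
    rw [sum_comm, sum_congr rfl fun j _ => (mem_filter.mp hu).2 j, sum_const, card_univ,
      Fintype.card_fin, nsmul_eq_mul, mul_one, (ZMod.natCast_eq_one_iff_odd).mpr hℓ, sgn_one]
  have hfull : 0 ≤ ∑ u ∈ full, sgn (∑ e, ∑ j, u e j) :=
    sum_sgn_nonneg_of_add_mem (fun u hu v hv => by
        simp only [full, mem_filter, mem_univ, true_and] at hu hv ⊢
        intro e he; simp [hu e he, hv e he])
      (fun u v => by simp [sum_add_distrib])
  have hgood : ∑ u : E → Fin ℓ → ZMod 2 with IsEvenLayerArray R u, sgn (∑ e, ∑ j, u e j) =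
      ∑ u ∈ full, sgn (∑ e, ∑ j, u e j) + #bad := by
    rw [hsplit, ← sum_filter_add_sum_filter_not full (fun u => ∀ j, ∑ e, u e j = 1), hbad]
    ring
  rw [hgood]
  by_cases hR : ∃ e, R e
  · obtain ⟨e₀, he₀⟩ := hR
    have : (fun e (_ : Fin ℓ) => if e = e₀ then (1 : ZMod 2) else 0) ∈ bad := by
      simp only [bad, full, mem_filter, mem_univ, true_and]
      exact ⟨fun e he => funext fun _ => if_neg (by rintro rfl; exact he he₀), fun j => by simp⟩
    have := card_pos.mpr ⟨_, this⟩
    omega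
  · push Not at hR
    have hzero : ∀ u ∈ full, u = 0 := fun u hu => funext fun e => (mem_filter.mp hu).2 e (hR e)
    have h0 : (0 : E → Fin ℓ → ZMod 2) ∈ full := by simp [full]
    have hone : ∀ u ∈ full, sgn (∑ e, ∑ j, u e j) = 1 := fun u hu => by simp [hzero u hu]
    rw [sum_congr rfl hone, sum_const, nsmul_one]
    have := card_pos.mpr ⟨_, h0⟩
    omega

lemma sum_sgn_isEvenLayerArray_eq_zero (hℓ : Odd ℓ) {R : E → Prop} {s : Finset E} {e₁ e₂ : E}
    (h₁ : R e₁) (h₂ : R e₂) (hs₁ : e₁ ∈ s) (hs₂ : e₂ ∉ s) :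
    ∑ u with IsEvenLayerArray R u, sgn (∑ e ∈ s, ∑ j : Fin ℓ, u e j) = 0 := by
  let δ (e₀ : E) : E → Fin ℓ → ZMod 2 := fun e j => if e = e₀ ∧ j = ⟨0, hℓ.pos⟩ then 1 else 0
  refine sum_sgn_eq_zero_of_add_mem (τ := δ e₁ + δ e₂)
    (fun u v => by simp [sum_add_distrib]) (fun u hu => ?_) ?_
  · obtain ⟨-, hsupp, j, hj⟩ := mem_filter.mp hu
    refine mem_filter.mpr ⟨mem_univ _, fun e he => ?_, j, ?_⟩
    · have h1 : e ≠ e₁ := by rintro rfl; exact he h₁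
      have h2 : e ≠ e₂ := by rintro rfl; exact he h₂
      funext j
      simp [δ, hsupp e he, h1, h2]
    · simp [δ, sum_add_distrib, hj, ite_and, CharTwo.add_self_eq_zero]
  · simp [δ, sum_add_distrib, hs₁, hs₂, ite_and]

theorem sum_sgn_isEvenLayerArray_nonneg (hℓ : Odd ℓ) (R : E → Prop) (s : Finset E) :
    0 ≤ ∑ u with IsEvenLayerArray R u, sgn (∑ e ∈ s, ∑ j : Fin ℓ, u e j) := by
  by_cases hmixed : ∃ e₁ e₂, R e₁ ∧ R e₂ ∧ e₁ ∈ s ∧ e₂ ∉ s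
  · obtain ⟨e₁, e₂, h₁, h₂, hs₁, hs₂⟩ := hmixed
    exact (sum_sgn_isEvenLayerArray_eq_zero hℓ h₁ h₂ hs₁ hs₂).ge
  push Not at hmixed
  by_cases hin : ∃ e ∈ s, R e
  · obtain ⟨e₁, hs₁, h₁⟩ := hin
    have : ∀ u ∈ ({u | IsEvenLayerArray R u} : Finset (E → Fin ℓ → ZMod 2)),
        ∑ e ∈ s, ∑ j, u e j = ∑ e, ∑ j, u e j := by
      intro u hu
      refine sum_subset (subset_univ s) fun e _ he => ?_
      rw [(mem_filter.mp hu).2.1 e fun hR => he (hmixed e₁ e h₁ hR hs₁)]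
      simp
    rw [sum_congr rfl fun u hu => congrArg sgn (this u hu)]
    exact (sum_sgn_isEvenLayerArray_pos hℓ R).le
  · push Not at hin
    have : ∀ u ∈ ({u | IsEvenLayerArray R u} : Finset (E → Fin ℓ → ZMod 2)),
        sgn (∑ e ∈ s, ∑ j, u e j) = 1 := by
      intro u hu
      rw [sum_eq_zero fun e he => ?_, sgn_zero]
      rw [(mem_filter.mp hu).2.1 e (hin e he)]
      simp
    rw [sum_congr rfl this]
    simp

end Layers

variable {V : Type*} {H : SimpleGraph V} {X : Set V} {ℓ : ℕ}

section CopyGraph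

@[simp] lemma copyGraph_adj_inl_inl {x x' : X} :
    (copyGraph H X ℓ).Adj (.inl x) (.inl x') ↔ H.Adj x x' := by
  simp [copyGraph, gammaMap, copyIdx]

@[simp] lemma copyGraph_adj_inl_inr {x : X} {v : ↥Xᶜ} {j : Fin ℓ} :
    (copyGraph H X ℓ).Adj (.inl x) (.inr (v, j)) ↔ H.Adj x v := by
  simp [copyGraph, gammaMap, copyIdx]

@[simp] lemma copyGraph_adj_inr_inl {x : X} {v : ↥Xᶜ} {j : Fin ℓ} :
    (copyGraph H X ℓ).Adj (.inr (v, j)) (.inl x) ↔ H.Adj v x := by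
  simp [copyGraph, gammaMap, copyIdx]

@[simp] lemma copyGraph_adj_inr_inr {v w : ↥Xᶜ} {i j : Fin ℓ} :
    (copyGraph H X ℓ).Adj (.inr (v, i)) (.inr (w, j)) ↔ H.Adj v w ∧ i = j := by
  simp [copyGraph, gammaMap, copyIdx]

def liftVert (idx : ↥Xᶜ → Fin ℓ) (u : V) : ↥X ⊕ (↥Xᶜ × Fin ℓ) :=
  if hu : u ∈ X then .inl ⟨u, hu⟩ else .inr (⟨u, hu⟩, idx ⟨u, hu⟩)

variable {idx : ↥Xᶜ → Fin ℓ}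

@[simp] lemma liftVert_coe_mem (x : X) : liftVert idx x = .inl x := dif_pos x.2

@[simp] lemma liftVert_coe_compl (v : ↥Xᶜ) : liftVert idx v = .inr (v, idx v) := dif_neg v.2

@[simp] lemma gammaMap_liftVert (u : V) : gammaMap X ℓ (liftVert idx u) = u := by
  unfold liftVert; split <;> rfl

lemma exists_eq_liftVert {f : V → ↥X ⊕ (↥Xᶜ × Fin ℓ)} (hf : ∀ u, gammaMap X ℓ (f u) = u) :
    ∃ idx : ↥Xᶜ → Fin ℓ, ∀ u, f u = liftVert idx u := by
  have hout (v : ↥Xᶜ) : ∃ j, f v = .inr (v, j) := by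
    rcases hfv : f v with x | ⟨w, j⟩ <;> have := hf v <;> rw [hfv] at this
    · exact absurd ((show (x : V) = v from this) ▸ x.2) v.2
    · exact ⟨j, by rw [Subtype.ext this]⟩
  choose idx hidx using hout
  refine ⟨idx, fun u => ?_⟩
  by_cases hu : u ∈ X
  · lift u to X using hu
    rcases hfu : f u with x | ⟨w, j⟩ <;> have := hf u <;> rw [hfu] at this
    · rw [liftVert_coe_mem, Subtype.ext this]
    · exact absurd ((show (w : V) = u from this) ▸ u.2) w.2
  · lift u to ↥Xᶜ using hu
    rw [hidx, liftVert_coe_compl]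

lemma copyGraph_adj_liftVert {u w : V} :
    (copyGraph H X ℓ).Adj (liftVert idx u) (liftVert idx w) ↔
      H.Adj u w ∧ ∀ (hu : u ∉ X) (hw : w ∉ X), idx ⟨u, hu⟩ = idx ⟨w, hw⟩ := by
  by_cases hu : u ∈ X <;> by_cases hw : w ∈ X
  · lift u to X using hu; lift w to X using hw; simp
  · lift u to X using hu; lift w to ↥Xᶜ using hw; simp
  · lift u to ↥Xᶜ using hu; lift w to X using hw; simp
  · lift u to ↥Xᶜ using hu; lift w to ↥Xᶜ using hw
    simp [show (u : V) ∉ X from u.2, show (w : V) ∉ X from w.2]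

end CopyGraph

section Coordinates

variable (X ℓ) in
/-- Coordinates of an answer `x ↦ (x, S_x)`: `c.1 x x'` records whether `x' ∈ S_x`, and
`c.2 (v, x) j` whether the `j`-th copy of `v` lies in `S_x`. -/
abbrev Coords := (↥X → ↥X → ZMod 2) × (↥Xᶜ × ↥X → Fin ℓ → ZMod 2)

def profile (c : Coords X ℓ) (x : X) : ↥X ⊕ (↥Xᶜ × Fin ℓ) → ZMod 2 :=
  Sum.elim (c.1 x) fun q => c.2 (q.1, x) q.2

def ofProfile (s : ↥X → ↥X ⊕ (↥Xᶜ × Fin ℓ) → ZMod 2) : Coords X ℓ :=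
  (fun x x' => s x (.inl x'), fun p j => s p.2 (.inr (p.1, j)))

@[simp] lemma profile_ofProfile (s : ↥X → ↥X ⊕ (↥Xᶜ × Fin ℓ) → ZMod 2) :
    profile (ofProfile s) = s := by
  funext x φ; cases φ <;> rfl

def coords {W : Set (↥X ⊕ (↥Xᶜ × Fin ℓ))} (a : ↥X → CFIVert (copyGraph H X ℓ) W) :
    Coords X ℓ :=
  ofProfile fun x φ => if φ ∈ (a x).1.2 then 1 else 0

variable [Fintype V]

def degree (c : Coords X ℓ) (x : X) : ZMod 2 := ∑ φ, profile c x φ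

variable (H) in
def IsSymmAdj (η : ↥X → ↥X → ZMod 2) : Prop :=
  ∀ x x', η x x' = η x' x ∧ (η x x' ≠ 0 → H.Adj x x')

variable (H) in
def IsEvenLayered (t : ↥Xᶜ × ↥X → Fin ℓ → ZMod 2) : Prop :=
  (∀ p, ¬ H.Adj p.2 p.1 → t p = 0) ∧
    ∀ C, ∃ j, ∑ p with (H.induce Xᶜ).connectedComponentMk p.1 = C, t p j = 0

variable (H X ℓ) in
def admissible : Finset (Coords X ℓ) := {c | IsSymmAdj H c.1 ∧ IsEvenLayered H c.2}

lemma copyGraph_adj_of_profile_ne_zero {c : Coords X ℓ} (hc : c ∈ admissible H X ℓ) {x : X}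
    {φ : ↥X ⊕ (↥Xᶜ × Fin ℓ)} (h : profile c x φ ≠ 0) : (copyGraph H X ℓ).Adj (.inl x) φ := by
  obtain ⟨hη, ht, -⟩ := (mem_filter.mp hc).2
  rcases φ with x' | ⟨v, j⟩
  · exact copyGraph_adj_inl_inl.mpr ((hη x x').2 h)
  · exact copyGraph_adj_inl_inr.mpr (by_contra fun hxv => h (congrFun (ht (v, x) hxv) j))

end Coordinates

section Construction

def homOfLabel {U : Type*} [Fintype U] {F : SimpleGraph U} {S : Set U} (ρ : H →g F)
    (lab : U → U → ZMod 2) (hlab : ∀ a b, lab a b = lab b a)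
    (hpar : ∀ u, ∑ φ, (if F.Adj (ρ u) φ then lab (ρ u) φ else 0) = if ρ u ∈ S then 1 else 0) :
    H →g CFI F S where
  toFun u := ⟨(ρ u, {φ | F.Adj (ρ u) φ ∧ lab (ρ u) φ = 1}), fun _ h => h.1,
    natCast_eq_ite_iff.mp <| by
      rw [natCast_ncard_eq_sum, ← hpar u]
      exact sum_congr rfl fun φ _ => by
        rcases eq_zero_or_one (lab (ρ u) φ) with h | h <;> simp [h]⟩
  map_rel' {u w} h := ⟨ρ.map_rel h, by simp [F.adj_comm, hlab]⟩

lemma mem_homOfLabel {U : Type*} [Fintype U] {F : SimpleGraph U} {S : Set U} {ρ : H →g F}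
    {lab : U → U → ZMod 2} {hlab} {hpar} {u : V} {φ : U} :
    φ ∈ (homOfLabel (S := S) ρ lab hlab hpar u).1.2 ↔ F.Adj (ρ u) φ ∧ lab (ρ u) φ = 1 :=
  Iff.rfl

def edgeLabel (s : ↥X → ↥X ⊕ (↥Xᶜ × Fin ℓ) → ZMod 2) (ε : ↥Xᶜ → ↥Xᶜ → ZMod 2) :
    ↥X ⊕ (↥Xᶜ × Fin ℓ) → ↥X ⊕ (↥Xᶜ × Fin ℓ) → ZMod 2
  | .inl x, φ => s x φ
  | .inr q, .inl x => s x (.inr q)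
  | .inr (v, _), .inr (w, _) => ε v w

lemma edgeLabel_symm {s : ↥X → ↥X ⊕ (↥Xᶜ × Fin ℓ) → ZMod 2} {ε : ↥Xᶜ → ↥Xᶜ → ZMod 2}
    (hs : ∀ x x', s x (.inl x') = s x' (.inl x)) (hε : ∀ v w, ε v w = ε w v)
    (φ ψ : ↥X ⊕ (↥Xᶜ × Fin ℓ)) : edgeLabel s ε φ ψ = edgeLabel s ε ψ φ := by
  rcases φ with x | ⟨v, i⟩ <;> rcases ψ with x' | ⟨w, j⟩
  · exact hs x x'
  · rfl
  · rfl
  · exact hε v w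

variable [Fintype V] {W : Set (↥X ⊕ (↥Xᶜ × Fin ℓ))} {c : Coords X ℓ}

lemma exists_copyIdx_tJoin (hc : c ∈ admissible H X ℓ) :
    ∃ idx : ↥Xᶜ → Fin ℓ, (∀ v w : ↥Xᶜ, H.Adj v w → idx v = idx w) ∧
      ∃ ε : ↥Xᶜ → ↥Xᶜ → ZMod 2, (∀ v w, ε v w = ε w v) ∧ (∀ v w, ε v w ≠ 0 → H.Adj v w) ∧
        ∀ v, ∑ w, ε v w = ∑ x, c.2 (v, x) (idx v) := by
  obtain ⟨-, -, hlayer⟩ := (mem_filter.mp hc).2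
  choose j hj using hlayer
  refine ⟨fun v => j ((H.induce Xᶜ).connectedComponentMk v), fun v w h => ?_,
    (H.induce Xᶜ).exists_symm_adj_sum_eq _ fun C => ?_⟩
  · simp only [SimpleGraph.ConnectedComponent.connectedComponentMk_eq_of_adj
      (G := H.induce Xᶜ) h]
  · rw [← hj C, sum_filter_fst (fun v => (H.induce Xᶜ).connectedComponentMk v = C)]
    exact sum_congr rfl fun v hv => by simp only [(mem_filter.mp hv).2]

lemma sum_adj_edgeLabel_liftVert (hW : ∀ p, Sum.inr p ∉ W) (hc : c ∈ admissible H X ℓ)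
    (hdeg : ∀ x, degree c x = if Sum.inl x ∈ W then 1 else 0) {idx : ↥Xᶜ → Fin ℓ}
    {ε : ↥Xᶜ → ↥Xᶜ → ZMod 2} (hεadj : ∀ v w, ε v w ≠ 0 → H.Adj v w)
    (hεsum : ∀ v, ∑ w, ε v w = ∑ x, c.2 (v, x) (idx v)) (u : V) :
    ∑ φ, (if (copyGraph H X ℓ).Adj (liftVert idx u) φ then
      edgeLabel (profile c) ε (liftVert idx u) φ else 0) = if liftVert idx u ∈ W then 1 else 0 := by
  obtain ⟨-, ht, -⟩ := (mem_filter.mp hc).2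
  by_cases hu : u ∈ X
  · lift u to X using hu
    simp only [liftVert_coe_mem, edgeLabel, ← hdeg u, degree]
    refine sum_congr rfl fun φ _ => ?_
    split_ifs with h
    · rfl
    · by_contra hne; exact h (copyGraph_adj_of_profile_ne_zero hc (Ne.symm hne))
  · lift u to ↥Xᶜ using hu
    simp only [liftVert_coe_compl, if_neg (hW _), Fintype.sum_sum_type, Fintype.sum_prod_type,
      edgeLabel, copyGraph_adj_inr_inl, copyGraph_adj_inr_inr, ite_and]
    have hX (x : X) : (if H.Adj u x then profile c x (.inr (u, idx u)) else 0) =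
        c.2 (u, x) (idx u) := by
      split_ifs with h
      · rfl
      · exact (congrFun (ht (u, x) fun h' => h h'.symm) _).symm
    have hXc (w : ↥Xᶜ) : (∑ i, if H.Adj u w then if idx u = i then ε u w else 0 else 0) =
        ε u w := by
      split_ifs with h
      · simp
      · rw [sum_const_zero]
        exact (by_contra fun hne => h (hεadj u w hne)).symm
    rw [sum_congr rfl fun x _ => hX x, sum_congr rfl fun w _ => hXc w, hεsum,
      CharTwo.add_self_eq_zero]

theorem exists_mem_cpAnsCFI_coords_eq (hW : ∀ p, Sum.inr p ∉ W) (hc : c ∈ admissible H X ℓ)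
    (hdeg : ∀ x, degree c x = if Sum.inl x ∈ W then 1 else 0) :
    ∃ a ∈ cpAnsCFI H X ℓ W, coords a = c := by
  obtain ⟨hη, -⟩ := (mem_filter.mp hc).2
  obtain ⟨idx, hidx, ε, hεsymm, hεadj, hεsum⟩ := exists_copyIdx_tJoin hc
  let ρ : H →g copyGraph H X ℓ :=
    ⟨liftVert idx, fun h => copyGraph_adj_liftVert.mpr ⟨h, fun _ _ => hidx _ _ h⟩⟩
  let h := homOfLabel (S := W) ρ (edgeLabel (profile c) ε)
    (edgeLabel_symm (fun x x' => (hη x x').1) hεsymm)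
    (sum_adj_edgeLabel_liftVert hW hc hdeg hεadj hεsum)
  refine ⟨fun x => h x, ⟨h, fun u => gammaMap_liftVert u, fun x => rfl⟩, ?_⟩
  change _ = ofProfile (profile c)
  refine congrArg ofProfile (funext fun x => funext fun φ => ?_)
  have hρ : ρ x = .inl x := liftVert_coe_mem x
  simp only [h, mem_homOfLabel, hρ, edgeLabel]
  rcases eq_zero_or_one (profile c x φ) with h0 | h0
  · simp [h0]
  · simp [h0, copyGraph_adj_of_profile_ne_zero hc (h0 ▸ one_ne_zero)]

end Construction

section Answers

variable {W : Set (↥X ⊕ (↥Xᶜ × Fin ℓ))} {h : H →g CFI (copyGraph H X ℓ) W}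
  {idx : ↥Xᶜ → Fin ℓ} (hidx : ∀ u, (h u).1.1 = liftVert idx u)
include hidx

lemma adj_of_mem {u : V} {φ} (hφ : φ ∈ (h u).1.2) : (copyGraph H X ℓ).Adj (liftVert idx u) φ :=
  hidx u ▸ (h u).2.1 hφ

lemma liftVert_mem_comm (u w : V) :
    liftVert idx w ∈ (h u).1.2 ↔ liftVert idx u ∈ (h w).1.2 := by
  by_cases huw : H.Adj u w
  · have := (h.map_rel huw).2
    rwa [hidx, hidx] at this
  · exact iff_of_false (fun hm => huw (copyGraph_adj_liftVert.mp (adj_of_mem hidx hm)).1)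
      fun hm => huw (copyGraph_adj_liftVert.mp (adj_of_mem hidx hm)).1.symm

lemma idx_eq_of_connectedComponentMk_eq {v w : ↥Xᶜ}
    (hvw : (H.induce Xᶜ).connectedComponentMk v = (H.induce Xᶜ).connectedComponentMk w) :
    idx v = idx w := by
  refine (SimpleGraph.ConnectedComponent.exact hvw).eq_of_forall_adj fun v w hadj => ?_
  have := (h.map_rel hadj).1
  rw [hidx, hidx] at this
  exact (copyGraph_adj_liftVert.mp this).2 v.2 w.2

variable [Fintype V]

lemma sum_inl_mem_eq_sum_inr_mem (hW : ∀ p, Sum.inr p ∉ W) (v : ↥Xᶜ) :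
    ∑ x : X, (if .inl x ∈ (h v).1.2 then 1 else 0 : ZMod 2) =
      ∑ w : ↥Xᶜ, if .inr (w, idx v) ∈ (h v).1.2 then 1 else 0 := by
  have hpar := natCast_eq_ite_iff.mpr (h v).2.2
  rw [hidx, liftVert_coe_compl, if_neg (hW _), natCast_ncard_eq_sum, Fintype.sum_sum_type,
    Fintype.sum_prod_type] at hpar
  have hlayer (w : ↥Xᶜ) : ∑ i, (if .inr (w, i) ∈ (h v).1.2 then 1 else 0 : ZMod 2) =
      if .inr (w, idx v) ∈ (h v).1.2 then 1 else 0 := by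
    refine sum_eq_single (idx v) (fun i _ hi => if_neg fun hm => hi ?_) (by simp)
    have := adj_of_mem hidx hm
    rw [liftVert_coe_compl, copyGraph_adj_inr_inr] at this
    exact this.2.symm
  rw [sum_congr rfl fun w _ => hlayer w] at hpar
  exact CharTwo.add_eq_zero.mp hpar

lemma sum_liftVert_mem_eq_sum_comp (hW : ∀ p, Sum.inr p ∉ W) (v : ↥Xᶜ) :
    ∑ x : X, (if .inr (v, idx v) ∈ (h x).1.2 then 1 else 0 : ZMod 2) =
      ∑ w with (H.induce Xᶜ).connectedComponentMk w = (H.induce Xᶜ).connectedComponentMk v,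
        if .inr (w, idx v) ∈ (h v).1.2 then 1 else 0 := by
  calc _ = ∑ x : X, (if .inl x ∈ (h v).1.2 then 1 else 0 : ZMod 2) := by
        refine sum_congr rfl fun x _ => ?_
        have := liftVert_mem_comm hidx x v
        rw [liftVert_coe_compl, liftVert_coe_mem] at this
        simp only [this]
    _ = ∑ w, if .inr (w, idx v) ∈ (h v).1.2 then 1 else 0 := sum_inl_mem_eq_sum_inr_mem hidx hW v
    _ = _ := by
        refine (sum_filter_of_ne fun w _ hw => ?_).symm
        have hm : .inr (w, idx v) ∈ (h v).1.2 := by_contra fun hm => hw (if_neg hm)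
        have := adj_of_mem hidx hm
        rw [liftVert_coe_compl, copyGraph_adj_inr_inr] at this
        exact (SimpleGraph.ConnectedComponent.connectedComponentMk_eq_of_adj
          (G := H.induce Xᶜ) this.1).symm

lemma exists_layer_sum_eq_zero (hW : ∀ p, Sum.inr p ∉ W) (C : (H.induce Xᶜ).ConnectedComponent) :
    ∃ j, ∑ p : ↥Xᶜ × X with (H.induce Xᶜ).connectedComponentMk p.1 = C,
      (if .inr (p.1, j) ∈ (h p.2).1.2 then 1 else 0 : ZMod 2) = 0 := by
  -- Each `S_v` with `v ∈ C` is even, and its edges inside `C` are counted twice in total.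
  obtain ⟨v₀, rfl⟩ : ∃ v₀, (H.induce Xᶜ).connectedComponentMk v₀ = C := C.exists_rep
  refine ⟨idx v₀, ?_⟩
  set K : Finset ↥Xᶜ := {v | (H.induce Xᶜ).connectedComponentMk v =
    (H.induce Xᶜ).connectedComponentMk v₀}
  have hcomp {v : ↥Xᶜ} (hv : v ∈ K) : idx v = idx v₀ :=
    idx_eq_of_connectedComponentMk_eq hidx (mem_filter.mp hv).2
  have hrow (v : ↥Xᶜ) (hv : v ∈ K) :
      ∑ x : X, (if .inr (v, idx v₀) ∈ (h x).1.2 then 1 else 0 : ZMod 2) =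
        ∑ w ∈ K, if .inr (w, idx v) ∈ (h v).1.2 then 1 else 0 := by
    rw [← hcomp hv, sum_liftVert_mem_eq_sum_comp hidx hW v, (mem_filter.mp hv).2]
  rw [sum_filter_fst (fun v => (H.induce Xᶜ).connectedComponentMk v = _), sum_congr rfl hrow]
  refine sum_sum_eq_zero_of_symm _ _ (fun v hv w hw => ?_) fun v _ => if_neg fun hm => ?_
  · have := liftVert_mem_comm hidx v w
    rw [liftVert_coe_compl, liftVert_coe_compl, hcomp hv, hcomp hw] at this
    simp only [this, hcomp hv, hcomp hw]
  · have := adj_of_mem hidx hm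
    rw [liftVert_coe_compl] at this
    exact (copyGraph H X ℓ).loopless.irrefl _ this

end Answers

section Count

variable {W : Set (↥X ⊕ (↥Xᶜ × Fin ℓ))}

lemma fst_eq_inl_of_mem_cpAnsCFI {a : ↥X → CFIVert (copyGraph H X ℓ) W}
    (ha : a ∈ cpAnsCFI H X ℓ W) (x : X) : (a x).1.1 = .inl x := by
  obtain ⟨h, hγ, hax⟩ := ha
  obtain ⟨idx, hidx⟩ := exists_eq_liftVert (f := fun u => (h u).1.1) hγ
  rw [← hax, hidx, liftVert_coe_mem]

lemma coords_injOn : Set.InjOn coords (cpAnsCFI H X ℓ W) := by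
  intro a ha a' ha' heq
  funext x
  refine Subtype.ext (Prod.ext (by rw [fst_eq_inl_of_mem_cpAnsCFI ha,
    fst_eq_inl_of_mem_cpAnsCFI ha']) (Set.ext fun φ => ?_))
  have := congrFun (congrFun (congrArg profile heq) x) φ
  simp only [coords, profile_ofProfile] at this
  by_cases hφ : φ ∈ (a x).1.2 <;> by_cases hφ' : φ ∈ (a' x).1.2 <;> simp_all

variable [Fintype V]

lemma coords_mem_admissible (hW : ∀ p, Sum.inr p ∉ W) {a : ↥X → CFIVert (copyGraph H X ℓ) W}
    (ha : a ∈ cpAnsCFI H X ℓ W) :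
    coords a ∈ admissible H X ℓ ∧ ∀ x, degree (coords a) x = if Sum.inl x ∈ W then 1 else 0 := by
  obtain ⟨h, hγ, hax⟩ := ha
  obtain rfl : a = fun x : X => h x := funext fun x => (hax x).symm
  obtain ⟨idx, hidx⟩ := exists_eq_liftVert (f := fun u => (h u).1.1) hγ
  have hinl (x : X) {φ} (hφ : φ ∈ (h x).1.2) : (copyGraph H X ℓ).Adj (.inl x) φ := by
    simpa using adj_of_mem hidx hφ
  refine ⟨mem_filter.mpr ⟨mem_univ _, fun x x' => ⟨?_, fun hne => ?_⟩,
    fun p hp => funext fun j => if_neg fun hm => hp ?_, exists_layer_sum_eq_zero hidx hW⟩,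
    fun x => ?_⟩
  · have := liftVert_mem_comm hidx x x'
    simp only [liftVert_coe_mem] at this
    simp only [coords, ofProfile, this]
  · have hm : .inl x' ∈ (h x).1.2 := by_contra fun hm => hne (if_neg hm)
    simpa using hinl x hm
  · simpa using hinl p.2 hm
  · rw [degree, coords, profile_ofProfile, ← natCast_ncard_eq_sum, natCast_eq_ite_iff,
      ← liftVert_coe_mem (idx := idx), ← hidx]
    exact (h x).2.2

theorem card_cpAnsCFI (hW : ∀ p, Sum.inr p ∉ W) :
    Nat.card (cpAnsCFI H X ℓ W) =
      #{c ∈ admissible H X ℓ | degree c = fun x => if Sum.inl x ∈ W then 1 else 0} := by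
  rw [Nat.card_coe_set_eq, ← coords_injOn.ncard_image, ← Set.ncard_coe_finset]
  congr 1
  ext c
  simp only [Set.mem_image, coe_filter, Set.mem_ofPred_eq]
  constructor
  · rintro ⟨a, ha, rfl⟩
    exact ⟨(coords_mem_admissible hW ha).1, funext (coords_mem_admissible hW ha).2⟩
  · rintro ⟨hc, hdeg⟩
    exact exists_mem_cpAnsCFI_coords_eq hW hc (congrFun hdeg)

end Count

section SignedCount

variable [Fintype V]

lemma sum_sgn_isSymmAdj_nonneg (ε : Finset X) :
    0 ≤ ∑ η with IsSymmAdj H η, sgn (∑ x ∈ ε, ∑ x', η x x') := by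
  refine sum_sgn_nonneg_of_add_mem (fun η hη η' hη' => ?_) fun η η' => by simp [sum_add_distrib]
  simp only [mem_filter, mem_univ, true_and] at hη hη' ⊢
  intro x x'
  refine ⟨by simp [(hη x x').1, (hη' x x').1], fun hne => ?_⟩
  by_contra hadj
  exact hne (by simp [not_imp_comm.mp (hη x x').2 hadj, not_imp_comm.mp (hη' x x').2 hadj])

lemma sum_sgn_isSymmAdj_pos :
    0 < ∑ η : ↥X → ↥X → ZMod 2 with IsSymmAdj H η, sgn (∑ x, ∑ x', η x x') := by
  have hzero : ∀ η ∈ (univ.filter fun η : ↥X → ↥X → ZMod 2 => IsSymmAdj H η),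
      sgn (∑ x, ∑ x', η x x') = 1 := fun η hη => by
    have hη := (mem_filter.mp hη).2
    rw [sum_sum_eq_zero_of_symm univ _ (fun x _ x' _ => (hη x x').1)
      fun x _ => not_imp_comm.mp (hη x x).2 (H.loopless.irrefl _), sgn_zero]
  rw [sum_congr rfl hzero, sum_const, nsmul_one, Nat.cast_pos, card_pos]
  exact ⟨0, mem_filter.mpr ⟨mem_univ _, fun x x' => by simp⟩⟩

variable (H) in
abbrev PairsInto (C : (H.induce Xᶜ).ConnectedComponent) :=
  {p : ↥Xᶜ × X // (H.induce Xᶜ).connectedComponentMk p.1 = C}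

lemma sum_sgn_isEvenLayered_eq_prod (ε : Finset X) :
    ∑ t with IsEvenLayered H t, sgn (∑ p with p.2 ∈ ε, ∑ j : Fin ℓ, t p j) =
      ∏ C, ∑ u : PairsInto H C → Fin ℓ → ZMod 2 with
        IsEvenLayerArray (fun q => H.Adj q.1.2 q.1.1) u, sgn (∑ q with q.1.2 ∈ ε, ∑ j, u q j) := by
  set R := fun C (q : PairsInto H C) => H.Adj q.1.2 q.1.1
  have hiff (t : ↥Xᶜ × X → Fin ℓ → ZMod 2) :
      IsEvenLayered H t ↔ ∀ C, IsEvenLayerArray (R C) fun q => t q.1 := by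
    simp only [IsEvenLayered, IsEvenLayerArray, forall_and]
    refine and_congr ⟨fun h C q => h q, fun h p => h _ ⟨p, rfl⟩⟩ (forall_congr' fun C => ?_)
    exact exists_congr fun j => by
      rw [sum_subtype (p := fun p : ↥Xᶜ × X => (H.induce Xᶜ).connectedComponentMk p.1 = C) _
        (fun p => by simp) _]
  have hsgn (t : ↥Xᶜ × X → Fin ℓ → ZMod 2) :
      ∏ C, sgn (∑ q : PairsInto H C with q.1.2 ∈ ε, ∑ j, t q.1 j) =
        sgn (∑ p with p.2 ∈ ε, ∑ j, t p j) := by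
    rw [← sgn_sum]
    congr 1
    simp only [sum_filter]
    exact Fintype.sum_fiberwise (fun p : ↥Xᶜ × X => (H.induce Xᶜ).connectedComponentMk p.1)
      fun p => if p.2 ∈ ε then ∑ j, t p j else 0
  calc _ = ∑ t : ↥Xᶜ × X → Fin ℓ → ZMod 2, ∏ C, if IsEvenLayerArray (R C) (fun q => t q.1) then
          sgn (∑ q : PairsInto H C with q.1.2 ∈ ε, ∑ j, t q.1 j) else 0 := by
        rw [sum_filter]
        refine sum_congr rfl fun t _ => ?_
        rw [Fintype.prod_ite_zero, hsgn]
        exact if_congr (hiff t) rfl rfl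
    _ = _ := by
        rw [sum_prod_fiber (fun p : ↥Xᶜ × X => (H.induce Xᶜ).connectedComponentMk p.1) fun C u =>
          if IsEvenLayerArray (R C) u then sgn (∑ q with q.1.2 ∈ ε, ∑ j, u q j) else 0]
        simp only [sum_filter, R]

lemma sum_degree_eq (c : Coords X ℓ) (ε : Finset X) : ∑ x ∈ ε, degree c x =
    ∑ x ∈ ε, ∑ x', c.1 x x' + ∑ p with p.2 ∈ ε, ∑ j, c.2 p j := by
  simp only [degree, profile, Fintype.sum_sum_type, Sum.elim_inl, Sum.elim_inr, sum_add_distrib,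
    Fintype.sum_prod_type]
  rw [show ({p | p.2 ∈ ε} : Finset (↥Xᶜ × X)) = univ ×ˢ ε by ext; simp, sum_product]
  exact congrArg _ sum_comm

lemma sum_sgn_admissible_eq (ε : Finset X) :
    ∑ c ∈ admissible H X ℓ, sgn (∑ x ∈ ε, degree c x) =
      (∑ η : ↥X → ↥X → ZMod 2 with IsSymmAdj H η, sgn (∑ x ∈ ε, ∑ x', η x x')) *
        ∑ t : ↥Xᶜ × X → Fin ℓ → ZMod 2 with IsEvenLayered H t,
          sgn (∑ p with p.2 ∈ ε, ∑ j, t p j) := by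
  have hprod : admissible H X ℓ = ({η | IsSymmAdj H η} : Finset (↥X → ↥X → ZMod 2)) ×ˢ
      ({t | IsEvenLayered H t} : Finset (↥Xᶜ × X → Fin ℓ → ZMod 2)) := by
    ext c
    simp only [admissible, mem_filter, mem_product, mem_univ, true_and]
  rw [sum_mul_sum, ← sum_product', hprod]
  exact sum_congr rfl fun c _ => by rw [sum_degree_eq, sgn_add]

theorem sum_sgn_admissible_nonneg (hℓ : Odd ℓ) (ε : Finset X) :
    0 ≤ ∑ c ∈ admissible H X ℓ, sgn (∑ x ∈ ε, degree c x) := by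
  rw [sum_sgn_admissible_eq, sum_sgn_isEvenLayered_eq_prod]
  exact mul_nonneg (sum_sgn_isSymmAdj_nonneg ε)
    (prod_nonneg fun C _ => sum_sgn_isEvenLayerArray_nonneg hℓ _ _)

theorem sum_sgn_admissible_pos (hℓ : Odd ℓ) :
    0 < ∑ c ∈ admissible H X ℓ, sgn (∑ x, degree c x) := by
  rw [sum_sgn_admissible_eq, sum_sgn_isEvenLayered_eq_prod]
  refine mul_pos sum_sgn_isSymmAdj_pos (prod_pos fun C _ => ?_)
  simpa using sum_sgn_isEvenLayerArray_pos hℓ _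

end SignedCount

end CopyCFI

end

theorem stmt18_general {V : Type*} [Fintype V] (H : SimpleGraph V) (X : Set V) (x₁ : V) (hx₁ : x₁ ∈ X)
    (ℓ : ℕ) (hodd : Odd ℓ) :
    Nat.card ↥(cpAnsCFI H X ℓ (∅ : Set (↥X ⊕ (↥(Xᶜ) × Fin ℓ)))) >
      Nat.card ↥(cpAnsCFI H X ℓ {Sum.inl ⟨x₁, hx₁⟩}) := by
  classical
  rw [gt_iff_lt, CopyCFI.card_cpAnsCFI (by simp), CopyCFI.card_cpAnsCFI (by simp)]
  convert CopyCFI.card_filter_eq_single_lt_card_filter_eq_zero (CopyCFI.admissible H X ℓ)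
    CopyCFI.degree ⟨x₁, hx₁⟩ (CopyCFI.sum_sgn_admissible_nonneg hodd)
    (CopyCFI.sum_sgn_admissible_pos hodd) using 4
  · funext x
    by_cases hx : x = ⟨x₁, hx₁⟩
    · subst hx
      simp
    · simp [hx]
  · funext x
    simp

/-- Let `(H,X)` be a conjunctive query with `∅ ⊊ X ⊊ V(H)`, `H`
connected, and `x₁ ∈ X` adjacent to some vertex outside `X`.  Let `ℓ` be an odd
positive integer, `F = F_ℓ(H,X)` and `c = γ ∘ π₁`.  Then
`|cpAns((H,X),(χ(F,∅),c))| > |cpAns((H,X),(χ(F,{x₁}),c))|`. -/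
theorem stmt18 {V : Type*} [Fintype V] [DecidableEq V]
    (H : SimpleGraph V) (hconn : H.Connected)
    (X : Set V) (hne : X.Nonempty) (hproper : X ≠ Set.univ)
    (x₁ : V) (hx₁ : x₁ ∈ X) (y : V) (hy : y ∉ X) (hadj : H.Adj x₁ y)
    (ℓ : ℕ) (hodd : Odd ℓ) (hpos : 0 < ℓ) :
    Nat.card ↥(cpAnsCFI H X ℓ (∅ : Set (↥X ⊕ (↥(Xᶜ) × Fin ℓ)))) >
      Nat.card ↥(cpAnsCFI H X ℓ {Sum.inl ⟨x₁, hx₁⟩}) :=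
  stmt18_general H X x₁ hx₁ ℓ hodd
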